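/- For p an odd prime, let ∂_*: H_*(QΣCP^∞_+; F_p) → H_*(QS^0; F_p) be induced by the S^1-transfer, with Q(∂_*)(a_s) = (-1)^r βQ^rι if s = 2r(p-1)-1 and 0 otherwise. Then the image of Q(∂_*): QH_*(QΣCP^∞_+) → QH_*(QS^0) is exactly the span of all admissible monomials Q^Iι (with positive excess-plus-Bockstein) in which at least one Bockstein occurs. -/

import Mathlib

/-!
STATEMENT 11: (`p` odd) The image of `Q(∂_*): QH_*(QΣCP^∞_+) → QH_*(QS⁰)` — where
`Q(∂_*)(a_s) = (-1)^r βQ^rι` if `s = 2r(p-1) - 1` and `0` otherwise — is exactly the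
`F_p`-span of the admissible monomials `Q^Iι` with `e(I)+b(I) > 0` containing at least
one Bockstein.
-/

open scoped DirectSum

noncomputable section

variable (p : ℕ)

/-- Generators `β^εQ^s` of the Dyer–Lashof algebra: `(ε, s)` with `ε : Bool`. -/
abbrev DLGen : Type := Bool × ℕ

/-- The free associative `F_p`-algebra on the symbols `β^εQ^s`. -/
abbrev FreeO (p : ℕ) : Type := FreeAlgebra (ZMod p) DLGen

/-- The generator `β^εQ^s`. -/
def gen (p : ℕ) (ε : Bool) (s : ℕ) : FreeO p := FreeAlgebra.ι (ZMod p) (ε, s)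

/-- `deg β^εQ^s = 2s(p-1) - ε`. -/
def gdeg (p : ℕ) (g : DLGen) : ℤ := 2 * g.2 * ((p : ℤ) - 1) - (if g.1 then 1 else 0)

/-- The homogeneous component of degree `n` of the free algebra. -/
def HcompO (p : ℕ) (n : ℤ) : Submodule (ZMod p) (FreeO p) :=
  Submodule.span (ZMod p)
    {w | ∃ L : List DLGen, (L.map (gdeg p)).sum = n ∧
      w = (L.map fun g => gen p g.1 g.2).prod}

/-- The binomial coefficient `(i, j) = (i+j)!/(i!·j!)` mod `p`, zero if `i < 0` or `j < 0`. -/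
def bin (p : ℕ) (a b : ℤ) : ZMod p :=
  if 0 ≤ a ∧ 0 ≤ b then ((a + b).toNat.choose a.toNat : ZMod p) else 0

/-- The Adem elements `𝒜^{(ε,r,0,s)}`, `r > ps`. -/
def ademSetO1 (p : ℕ) : Set (FreeO p) :=
  {x | ∃ (ε : Bool) (r s : ℕ), p * s < r ∧
    x = gen p ε r * gen p false s -
      ∑ i ∈ Finset.range (r + s + 1),
        (((-1 : ZMod p) ^ (r + i)) *
          bin p ((p : ℤ) * i - r) ((r : ℤ) - ((p : ℤ) - 1) * s - i - 1)) •
          (gen p ε (r + s - i) * gen p false i)}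

/-- The Adem elements `𝒜^{(0,r,1,s)}`, `r ≥ ps`. -/
def ademSetO2 (p : ℕ) : Set (FreeO p) :=
  {x | ∃ (r s : ℕ), p * s ≤ r ∧
    x = gen p false r * gen p true s -
      (∑ i ∈ Finset.range (r + s + 1),
        (((-1 : ZMod p) ^ (r + i)) *
          bin p ((p : ℤ) * i - r) ((r : ℤ) - ((p : ℤ) - 1) * s - i)) •
          (gen p true (r + s - i) * gen p false i) -
       ∑ i ∈ Finset.range (r + s + 1),
        (((-1 : ZMod p) ^ (r + i)) *
          bin p ((p : ℤ) * i - r - 1) ((r : ℤ) - ((p : ℤ) - 1) * s - i)) •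
          (gen p false (r + s - i) * gen p true i))}

/-- The Adem elements `𝒜^{(1,r,1,s)}`, `r ≥ ps`. -/
def ademSetO3 (p : ℕ) : Set (FreeO p) :=
  {x | ∃ (r s : ℕ), p * s ≤ r ∧
    x = gen p true r * gen p true s +
      ∑ i ∈ Finset.range (r + s + 1),
        (((-1 : ZMod p) ^ (r + i)) *
          bin p ((p : ℤ) * i - r - 1) ((r : ℤ) - ((p : ℤ) - 1) * s - i)) •
          (gen p true (r + s - i) * gen p true i)}

/-- The unstable relations `β^εQ^s·x` for `2s - ε < deg x`, together with `βQ^0`. -/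
def unstableSetO (p : ℕ) : Set (FreeO p) :=
  {x | ∃ (ε : Bool) (s : ℕ) (n : ℤ) (w : FreeO p), w ∈ HcompO p n ∧
      2 * (s : ℤ) - (if ε then 1 else 0) < n ∧ x = gen p ε s * w} ∪
    {gen p true 0}

def dlRelO (p : ℕ) : FreeO p → FreeO p → Prop := fun x y =>
  (x ∈ ademSetO1 p ∪ ademSetO2 p ∪ ademSetO3 p ∪ unstableSetO p) ∧ y = 0

/-- The mod `p` Dyer–Lashof algebra. -/
abbrev DLO (p : ℕ) := RingQuot (dlRelO p)

def dlMkO (p : ℕ) : FreeO p →ₐ[ZMod p] DLO p := RingQuot.mkAlgHom (ZMod p) (dlRelO p)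

/-- Admissibility: `s_i ≤ p·s_{i-1} - ε_{i-1}`. -/
def AdmissibleO (p : ℕ) (L : List DLGen) : Prop :=
  List.Chain' (fun a b => (b.2 : ℤ) ≤ (p : ℤ) * a.2 - (if a.1 then 1 else 0)) L


/-- Excess `e(I)` of a monomial. -/
def excessO (p : ℕ) (L : List DLGen) : ℤ :=
  match L with
  | [] => 0
  | g :: t => 2 * g.2 - (if g.1 then 1 else 0) - (t.map (gdeg p)).sum

/-- `b(I) = ε₁`. -/
def bO (L : List DLGen) : ℤ :=
  match L with
  | [] => 0
  | g :: _ => if g.1 then 1 else 0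

/-- The free `Q`-unstable module `D'(F_p·a)` over the Dyer–Lashof algebra on one
generator `a` of degree `d`. -/
abbrev DmodO (p : ℕ) (d : ℤ) : Type :=
  DLO p ⧸ Submodule.span (DLO p)
    ({y : DLO p | ∃ (ε : Bool) (t : ℕ) (m : ℤ) (w : FreeO p), w ∈ HcompO p m ∧
        2 * (t : ℤ) - (if ε then 1 else 0) < m + d ∧ y = dlMkO p (gen p ε t * w)} ∪
     {y : DLO p | ∃ (t : ℕ) (m : ℤ) (w : FreeO p), w ∈ HcompO p m ∧
        2 * (t : ℤ) = m + d ∧ y = dlMkO p (gen p false t * w)})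

/-- `QH_*(QS⁰; F_p) = D'F_p` on the degree-zero generator `ι`. -/
abbrev NO (p : ℕ) : Type := DmodO p 0

def mkNO (p : ℕ) : DLO p → NO p := Submodule.Quotient.mk

/-- `QH_*(QΣCP^∞_+; F_p)`: the free `Q`-unstable module on generators `a_{2j+1}` of
degree `2j+1`, `j ≥ 0`. -/
abbrev MO (p : ℕ) : Type := ⨁ j : ℕ, DmodO p (2 * j + 1)

def aO (p : ℕ) (j : ℕ) : MO p :=
  DirectSum.of (fun j : ℕ => DmodO p (2 * j + 1)) j (Submodule.Quotient.mk 1)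

/-!
The image of `Q(∂_*)` is the `R`-submodule generated by the classes `βQ^rι`, i.e. the image of
the left ideal `I ⊆ R` generated by the `βQ^r`. By the Adem relations `βQ^sQ^t` is a combination
of elements `Q^aβQ^b` and `βQ^{s'}Q^{t'}` with `s' < s`, so `I` is a two-sided ideal and contains
every monomial with a Bockstein; this gives one inclusion. Conversely `I` is spanned by such
monomials, and in `QH_*(QS⁰)` each of them vanishes (by instability, or because `Q^s` on a class
of degree `2s` is a `p`-th power) unless it is admissible with `e(I) + b(I) > 0`: for `p ≥ 2`, a
pair violating admissibility already violates instability.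
-/

theorem FreeAlgebra.span_range_prod_map_ι (R X : Type*) [CommSemiring R] :
    Submodule.span R (Set.range fun L : List X => (L.map (FreeAlgebra.ι R)).prod) = ⊤ := by
  have hbasis : ⇑(FreeAlgebra.basisFreeMonoid R X) =
      (fun L : List X => (L.map (FreeAlgebra.ι R)).prod) ∘ FreeMonoid.toList := by
    ext w
    simp [FreeAlgebra.basisFreeMonoid, FreeAlgebra.equivMonoidAlgebraFreeMonoid,
      FreeMonoid.lift_apply]
  rw [← (FreeAlgebra.basisFreeMonoid R X).span_eq, hbasis,
    FreeMonoid.toList.surjective.range_comp]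

namespace DyerLashof

def word (L : List DLGen) : FreeO p := (L.map fun g => gen p g.1 g.2).prod

def wordDeg (L : List DLGen) : ℤ := (L.map (gdeg p)).sum

@[simp] lemma word_nil : word p [] = 1 := rfl

@[simp] lemma word_cons (g : DLGen) (L : List DLGen) :
    word p (g :: L) = gen p g.1 g.2 * word p L := List.prod_cons

@[simp] lemma word_append (L M : List DLGen) : word p (L ++ M) = word p L * word p M := by
  simp [word]

@[simp] lemma wordDeg_nil : wordDeg p [] = 0 := rfl

@[simp] lemma wordDeg_cons (g : DLGen) (L : List DLGen) :
    wordDeg p (g :: L) = gdeg p g + wordDeg p L := List.sum_cons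

lemma word_mem_HcompO (L : List DLGen) : word p L ∈ HcompO p (wordDeg p L) :=
  Submodule.subset_span ⟨L, rfl, rfl⟩

lemma span_range_word : Submodule.span (ZMod p) (Set.range (word p)) = ⊤ :=
  FreeAlgebra.span_range_prod_map_ι (ZMod p) DLGen

lemma dlMkO_surjective : Function.Surjective (dlMkO p) :=
  RingQuot.mkAlgHom_surjective (ZMod p) (dlRelO p)

lemma dlMkO_eq_zero_of_mem {x : FreeO p}
    (hx : x ∈ ademSetO1 p ∪ ademSetO2 p ∪ ademSetO3 p ∪ unstableSetO p) :
    dlMkO p x = 0 := by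
  have h := RingQuot.mkAlgHom_rel (ZMod p) (show dlRelO p x 0 from ⟨hx, rfl⟩)
  rwa [map_zero] at h

lemma dlMkO_gen_mul_word_eq_zero {ε : Bool} {s : ℕ} {v : List DLGen}
    (h : 2 * (s : ℤ) - (if ε then 1 else 0) < wordDeg p v) :
    dlMkO p (gen p ε s * word p v) = 0 :=
  dlMkO_eq_zero_of_mem p (Or.inr (Or.inl ⟨ε, s, _, _, word_mem_HcompO p v, h, rfl⟩))

lemma dlMkO_bockstein_zero : dlMkO p (gen p true 0) = 0 :=
  dlMkO_eq_zero_of_mem p (Or.inr (Or.inr rfl))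

lemma dlMkO_adem_of_lt (ε : Bool) {r s : ℕ} (h : p * s < r) :
    dlMkO p (gen p ε r * gen p false s) =
      ∑ i ∈ Finset.range (r + s + 1),
        (((-1 : ZMod p) ^ (r + i)) *
          bin p ((p : ℤ) * i - r) ((r : ℤ) - ((p : ℤ) - 1) * s - i - 1)) •
          dlMkO p (gen p ε (r + s - i) * gen p false i) := by
  have h0 := dlMkO_eq_zero_of_mem p (Or.inl (Or.inl (Or.inl ⟨ε, r, s, h, rfl⟩)))
  rw [map_sub, sub_eq_zero, map_sum] at h0
  simpa only [map_smul] using h0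

lemma dlMkO_adem_bockstein_of_le {r s : ℕ} (h : p * s ≤ r) :
    dlMkO p (gen p false r * gen p true s) =
      (∑ i ∈ Finset.range (r + s + 1),
        (((-1 : ZMod p) ^ (r + i)) *
          bin p ((p : ℤ) * i - r) ((r : ℤ) - ((p : ℤ) - 1) * s - i)) •
          dlMkO p (gen p true (r + s - i) * gen p false i)) -
      (∑ i ∈ Finset.range (r + s + 1),
        (((-1 : ZMod p) ^ (r + i)) *
          bin p ((p : ℤ) * i - r - 1) ((r : ℤ) - ((p : ℤ) - 1) * s - i)) •
          dlMkO p (gen p false (r + s - i) * gen p true i)) := by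
  have h0 := dlMkO_eq_zero_of_mem p (Or.inl (Or.inl (Or.inr ⟨r, s, h, rfl⟩)))
  rw [map_sub, sub_eq_zero, map_sub, map_sum, map_sum] at h0
  simpa only [map_smul] using h0

lemma bin_zero_left {b : ℤ} (hb : 0 ≤ b) : bin p 0 b = 1 := by
  simp [bin, hb]

lemma bin_of_neg_left {a : ℤ} (b : ℤ) (ha : a < 0) : bin p a b = 0 :=
  if_neg fun h => ha.not_ge h.1

def bocksteinIdeal : Ideal (DLO p) :=
  Ideal.span (Set.range fun r => dlMkO p (gen p true r))

lemma bockstein_mem_bocksteinIdeal (r : ℕ) : dlMkO p (gen p true r) ∈ bocksteinIdeal p :=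
  Ideal.subset_span ⟨r, rfl⟩

lemma dlMkO_bockstein_mul_gen_eq_zero {s t : ℕ} (h : (s : ℤ) ≤ ((p : ℤ) - 1) * t) :
    dlMkO p (gen p true s * gen p false t) = 0 := by
  simpa using dlMkO_gen_mul_word_eq_zero p (ε := true) (s := s) (v := [(false, t)])
    (by simp only [wordDeg_cons, wordDeg_nil, gdeg]; push_cast; linarith)

lemma bockstein_mul_gen_mem_of_lt {s t : ℕ} (hst : p * t < s)
    (ih : ∀ s' < s, ∀ t', dlMkO p (gen p true s' * gen p false t') ∈ bocksteinIdeal p) :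
    dlMkO p (gen p true s * gen p false t) ∈ bocksteinIdeal p := by
  rw [dlMkO_adem_of_lt p true hst]
  refine Submodule.sum_mem _ fun i hi => ?_
  rw [Finset.mem_range] at hi
  by_cases hit : i ≤ t
  · have hneg : (p : ℤ) * i - s < 0 := by
      have : (p : ℤ) * i ≤ p * t := by gcongr
      have : ((p * t : ℕ) : ℤ) < s := by exact_mod_cast hst
      push_cast at this
      linarith
    rw [bin_of_neg_left p _ hneg, mul_zero, zero_smul]
    exact zero_mem _
  · exact Submodule.smul_of_tower_mem _ _ (ih (s + t - i) (by omega) i)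

lemma bockstein_mul_gen_mem_of_le (hp : Odd p) {s t : ℕ} (hlt : ((p : ℤ) - 1) * t < s)
    (hle : s ≤ p * t)
    (ih : ∀ s' < s, ∀ t', dlMkO p (gen p true s' * gen p false t') ∈ bocksteinIdeal p) :
    dlMkO p (gen p true s * gen p false t) ∈ bocksteinIdeal p := by
  have hpt : p * t ≤ s + t := by zify; linarith
  set u := s + t - p * t
  have hut : u ≤ t := by omega
  have hcoef : (-1 : ZMod p) ^ (p * t + t) * bin p ((p : ℤ) * t - (p * t : ℕ))
      (((p * t : ℕ) : ℤ) - ((p : ℤ) - 1) * u - t) = 1 := by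
    have hsign : (-1 : ZMod p) ^ (p * t + t) = 1 := by
      rw [show p * t + t = (p + 1) * t by ring, pow_mul, hp.add_one.neg_one_pow, one_pow]
    have hu : (u : ℤ) ≤ t := by exact_mod_cast hut
    have hp1 : (1 : ℤ) ≤ p := by exact_mod_cast hp.pos
    rw [hsign, one_mul, Nat.cast_mul, sub_self, bin_zero_left p (by nlinarith)]
  have hmem : dlMkO p (gen p false (p * t) * gen p true u) ∈ bocksteinIdeal p := by
    rw [map_mul]
    exact Ideal.mul_mem_left _ _ (bockstein_mem_bocksteinIdeal p u)
  have ht : t ∈ Finset.range (p * t + u + 1) := Finset.mem_range.mpr (by omega)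
  rw [dlMkO_adem_bockstein_of_le p (by gcongr), Submodule.sub_mem_iff_left _ ?terms_mem,
    ← Finset.add_sum_erase _ _ ht, Submodule.add_mem_iff_left _ ?rest_mem, hcoef, one_smul,
    show p * t + u - t = s by omega] at hmem
  · exact hmem
  case terms_mem =>
    refine Submodule.sum_mem _ fun i _ => Submodule.smul_of_tower_mem _ _ ?_
    rw [map_mul]
    exact Ideal.mul_mem_left _ _ (bockstein_mem_bocksteinIdeal p i)
  case rest_mem =>
    refine Submodule.sum_mem _ fun i hi => ?_
    rw [Finset.mem_erase, Finset.mem_range] at hi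
    rcases lt_or_gt_of_ne hi.1 with hit | hit
    · have hneg : (p : ℤ) * i - (p * t : ℕ) < 0 := by
        have : (p : ℤ) * i < p * t := by
          have := hp.pos
          gcongr
        push_cast
        linarith
      rw [bin_of_neg_left p _ hneg, mul_zero, zero_smul]
      exact zero_mem _
    · exact Submodule.smul_of_tower_mem _ _ (ih (p * t + u - i) (by omega) i)

lemma bockstein_mul_gen_mem (hp : Odd p) (s t : ℕ) :
    dlMkO p (gen p true s * gen p false t) ∈ bocksteinIdeal p := by
  induction s using Nat.strong_induction_on generalizing t with
  | _ s ih =>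
    by_cases hunstable : (s : ℤ) ≤ ((p : ℤ) - 1) * t
    · rw [dlMkO_bockstein_mul_gen_eq_zero p hunstable]
      exact zero_mem _
    · rcases lt_or_ge (p * t) s with hlt | hle
      · exact bockstein_mul_gen_mem_of_lt p hlt ih
      · exact bockstein_mul_gen_mem_of_le p hp (not_le.mp hunstable) hle ih

lemma mul_gen_mem_bocksteinIdeal (hp : Odd p) {a : DLO p} (ha : a ∈ bocksteinIdeal p)
    (g : DLGen) : a * dlMkO p (gen p g.1 g.2) ∈ bocksteinIdeal p := by
  induction ha using Submodule.span_induction with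
  | mem x hx =>
    obtain ⟨r, rfl⟩ := hx
    obtain ⟨ε, t⟩ := g
    cases ε
    · rw [← map_mul]
      exact bockstein_mul_gen_mem p hp r t
    · exact Ideal.mul_mem_left _ _ (bockstein_mem_bocksteinIdeal p t)
  | zero => simp
  | add x y _ _ hx hy => rw [add_mul]; exact add_mem hx hy
  | smul c x _ hx => rw [smul_eq_mul, mul_assoc]; exact Ideal.mul_mem_left _ c hx

lemma bocksteinIdeal_isTwoSided (hp : Odd p) : (bocksteinIdeal p).IsTwoSided := by
  refine ⟨fun {a} b ha => ?_⟩
  obtain ⟨z, rfl⟩ := dlMkO_surjective p b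
  induction z using FreeAlgebra.induction generalizing a with
  | grade0 c => rw [AlgHom.commutes, ← Algebra.commutes]; exact Ideal.mul_mem_left _ _ ha
  | grade1 g => exact mul_gen_mem_bocksteinIdeal p hp ha g
  | mul x y hx hy => rw [map_mul, ← mul_assoc]; exact hy (hx ha)
  | add x y hx hy => rw [map_add, mul_add]; exact add_mem (hx ha) (hy ha)

lemma dlMkO_word_mem_bocksteinIdeal (hp : Odd p) {L : List DLGen} (hL : ∃ g ∈ L, g.1 = true) :
    dlMkO p (word p L) ∈ bocksteinIdeal p := by
  have := bocksteinIdeal_isTwoSided p hp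
  obtain ⟨⟨ε, s⟩, hmem, rfl : ε = true⟩ := hL
  obtain ⟨u, v, rfl⟩ := List.append_of_mem hmem
  rw [word_append, word_cons, ← mul_assoc, map_mul, map_mul]
  exact Ideal.mul_mem_right _ _
    (Ideal.mul_mem_left _ _ (bockstein_mem_bocksteinIdeal p s))

def mkNOₗ : DLO p →ₗ[DLO p] NO p := Submodule.mkQ _

lemma mkNOₗ_apply (x : DLO p) : mkNOₗ p x = mkNO p x := rfl

@[simp] lemma mkNO_zero : mkNO p 0 = 0 := Submodule.Quotient.mk_zero _

lemma mkNO_mul (x y : DLO p) : mkNO p (x * y) = x • mkNO p y := rfl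

def admissibleBocksteinMonomials : Set (NO p) :=
  {x | ∃ L : List DLGen, AdmissibleO p L ∧ (∃ g ∈ L, g.1 = true) ∧
    0 < excessO p L + bO L ∧ x = mkNO p (dlMkO p (word p L))}

def HasUnstableFactor (W : List DLGen) : Prop :=
  ∃ (u : List DLGen) (g : DLGen) (v w : List DLGen),
    W = u ++ g :: (v ++ w) ∧ 2 * (g.2 : ℤ) - (if g.1 then 1 else 0) < wordDeg p v

/-- `Q^s` applied to a class of degree `2s` is a `p`-th power, hence decomposable. -/
def HasPowerFactor (W : List DLGen) : Prop :=
  ∃ (u : List DLGen) (s : ℕ) (v : List DLGen), W = u ++ (false, s) :: v ∧ wordDeg p v = 2 * s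

lemma dlMkO_word_eq_zero_of_hasUnstableFactor {W : List DLGen} (h : HasUnstableFactor p W) :
    dlMkO p (word p W) = 0 := by
  obtain ⟨u, g, v, w, rfl, hlt⟩ := h
  rw [word_append, word_cons, word_append, ← mul_assoc (gen p g.1 g.2), map_mul, map_mul,
    dlMkO_gen_mul_word_eq_zero p hlt, zero_mul, mul_zero]

lemma mkNO_word_eq_zero_of_hasPowerFactor {W : List DLGen} (h : HasPowerFactor p W) :
    mkNO p (dlMkO p (word p W)) = 0 := by
  obtain ⟨u, s, v, rfl, hdeg⟩ := h
  have hzero : mkNO p (dlMkO p (gen p false s * word p v)) = 0 :=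
    (Submodule.Quotient.mk_eq_zero _).mpr <| Submodule.subset_span <|
      Or.inr ⟨s, _, _, word_mem_HcompO p v, by rw [hdeg, add_zero], rfl⟩
  rw [word_append, word_cons, map_mul, mkNO_mul, hzero, smul_zero]

lemma admissible_step_of_stable (hp : 2 ≤ p) (a b : DLGen)
    (ha : 0 ≤ 2 * (a.2 : ℤ) - (if a.1 then 1 else 0))
    (hab : gdeg p b ≤ 2 * (a.2 : ℤ) - (if a.1 then 1 else 0)) :
    (b.2 : ℤ) ≤ p * a.2 - (if a.1 then 1 else 0) := by
  obtain ⟨εa, A⟩ := a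
  obtain ⟨εb, B⟩ := b
  have hp' : (2 : ℤ) ≤ p := by exact_mod_cast hp
  cases εa <;> cases εb <;> simp only [gdeg, Bool.false_eq_true, if_true, if_false] at * <;>
    nlinarith

lemma hasUnstableFactor_cons {a : DLGen} {W : List DLGen} (h : HasUnstableFactor p W) :
    HasUnstableFactor p (a :: W) := by
  obtain ⟨u, g, v, w, rfl, hlt⟩ := h
  exact ⟨a :: u, g, v, w, rfl, hlt⟩

lemma admissibleO_of_not_hasUnstableFactor (hp : 2 ≤ p) {W : List DLGen}
    (hW : ¬ HasUnstableFactor p W) : AdmissibleO p W := by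
  induction W with
  | nil => exact List.isChain_nil
  | cons a T ih =>
    cases T with
    | nil => exact List.isChain_singleton a
    | cons b T =>
      refine List.isChain_cons_cons.mpr ⟨admissible_step_of_stable p hp a b ?_ ?_,
        ih fun h => hW (hasUnstableFactor_cons p h)⟩
      · exact not_lt.mp fun hlt => hW ⟨[], a, [], b :: T, rfl, hlt⟩
      · simpa using not_lt.mp fun hlt => hW ⟨[], a, [b], T, rfl, hlt⟩

lemma excessO_add_bO_pos (g : DLGen) (T : List DLGen) (h₁ : ¬ HasUnstableFactor p (g :: T))
    (h₂ : ¬ HasPowerFactor p (g :: T)) : 0 < excessO p (g :: T) + bO (g :: T) := by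
  obtain ⟨ε, s⟩ := g
  have hdeg : wordDeg p T ≤ 2 * (s : ℤ) - (if ε then 1 else 0) :=
    not_lt.mp fun hlt => h₁ ⟨[], (ε, s), T, [], by simp, hlt⟩
  show 0 < 2 * (s : ℤ) - (if ε then 1 else 0) - wordDeg p T + (if ε then 1 else 0)
  cases ε
  · have hne : wordDeg p T ≠ 2 * s := fun heq => h₂ ⟨[], s, T, rfl, heq⟩
    simp only [Bool.false_eq_true, if_false] at hdeg ⊢
    omega
  · simp only [if_true] at hdeg ⊢
    omega

lemma mkNO_word_mem_span (hp : 2 ≤ p) {W : List DLGen} (hW : ∃ g ∈ W, g.1 = true) :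
    mkNO p (dlMkO p (word p W)) ∈ Submodule.span (ZMod p) (admissibleBocksteinMonomials p) := by
  by_cases h₁ : HasUnstableFactor p W
  · rw [dlMkO_word_eq_zero_of_hasUnstableFactor p h₁]
    exact zero_mem _
  by_cases h₂ : HasPowerFactor p W
  · rw [mkNO_word_eq_zero_of_hasPowerFactor p h₂]
    exact zero_mem _
  obtain ⟨g, T, rfl⟩ : ∃ g T, W = g :: T :=
    W.exists_cons_of_ne_nil (by rintro rfl; simp at hW)
  exact Submodule.subset_span ⟨g :: T, admissibleO_of_not_hasUnstableFactor p hp h₁, hW,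
    excessO_add_bO_pos p g T h₁ h₂, rfl⟩

lemma mkNO_mul_bockstein_mem_span (hp : 2 ≤ p) (z : DLO p) (r : ℕ) :
    mkNO p (z * dlMkO p (gen p true r)) ∈
      Submodule.span (ZMod p) (admissibleBocksteinMonomials p) := by
  obtain ⟨w, rfl⟩ := dlMkO_surjective p z
  have hw : w ∈ Submodule.span (ZMod p) (Set.range (word p)) := by
    rw [span_range_word]; trivial
  induction hw using Submodule.span_induction with
  | mem x hx =>
    obtain ⟨L, rfl⟩ := hx
    rw [← map_mul, show word p L * gen p true r = word p (L ++ [(true, r)]) by simp]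
    exact mkNO_word_mem_span p hp ⟨(true, r), by simp, rfl⟩
  | zero => rw [map_zero, zero_mul, mkNO_zero]; exact zero_mem _
  | add x y _ _ hx hy => rw [map_add, add_mul]; exact add_mem hx hy
  | smul c x _ hx =>
    rw [map_smul, smul_mul_assoc]
    exact Submodule.smul_mem _ c hx

lemma mkNO_mem_span_of_mem_bocksteinIdeal (hp : 2 ≤ p) {y : DLO p}
    (hy : y ∈ bocksteinIdeal p) :
    mkNO p y ∈ Submodule.span (ZMod p) (admissibleBocksteinMonomials p) := by
  suffices ∀ z : DLO p, mkNO p (z * y) ∈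
      Submodule.span (ZMod p) (admissibleBocksteinMonomials p) by simpa using this 1
  induction hy using Submodule.span_induction with
  | mem x hx =>
    obtain ⟨r, rfl⟩ := hx
    exact fun z => mkNO_mul_bockstein_mem_span p hp z r
  | zero => intro z; rw [mul_zero, mkNO_zero]; exact zero_mem _
  | add x y _ _ hx hy => intro z; rw [mul_add]; exact add_mem (hx z) (hy z)
  | smul a x _ hx => intro z; rw [smul_eq_mul, ← mul_assoc]; exact hx (z * a)

lemma coe_map_bocksteinIdeal (hp : Odd p) (hp2 : 2 ≤ p) :
    (Submodule.map (mkNOₗ p) (bocksteinIdeal p) : Set (NO p)) =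
      Submodule.span (ZMod p) (admissibleBocksteinMonomials p) := by
  apply Set.Subset.antisymm
  · rintro _ ⟨y, hy, rfl⟩
    exact mkNO_mem_span_of_mem_bocksteinIdeal p hp2 hy
  · change _ ⊆
      ((Submodule.map (mkNOₗ p) (bocksteinIdeal p)).restrictScalars (ZMod p) : Set (NO p))
    rw [SetLike.coe_subset_coe, Submodule.span_le]
    rintro _ ⟨L, -, hL, -, rfl⟩
    exact ⟨_, dlMkO_word_mem_bocksteinIdeal p hp hL, rfl⟩

lemma span_range_aO : Submodule.span (DLO p) (Set.range (aO p)) = ⊤ := by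
  refine Submodule.eq_top_iff'.mpr fun m => ?_
  induction m using DirectSum.induction_on with
  | zero => exact zero_mem _
  | of j q =>
    obtain ⟨x, rfl⟩ := Submodule.Quotient.mk_surjective _ q
    have : DirectSum.of (fun j : ℕ => DmodO p (2 * j + 1)) j (Submodule.Quotient.mk x) =
        x • aO p j := by
      rw [aO, ← DirectSum.lof_eq_of (DLO p), ← DirectSum.lof_eq_of (DLO p), ← map_smul,
        ← Submodule.Quotient.mk_smul, smul_eq_mul, mul_one]
    rw [this]
    exact Submodule.smul_mem _ x (Submodule.subset_span ⟨j, rfl⟩)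
  | add m m' hm hm' => exact add_mem hm hm'

lemma range_eq_map_bocksteinIdeal (hp : 2 ≤ p) (f : MO p →ₗ[DLO p] NO p)
    (hf : ∀ j r : ℕ, (j : ℤ) + 1 = r * ((p : ℤ) - 1) →
      f (aO p j) = ((-1 : ZMod p) ^ r) • mkNO p (dlMkO p (gen p true r)))
    (hf0 : ∀ j : ℕ, (¬ ∃ r : ℕ, (j : ℤ) + 1 = r * ((p : ℤ) - 1)) → f (aO p j) = 0) :
    LinearMap.range f = Submodule.map (mkNOₗ p) (bocksteinIdeal p) := by
  rw [LinearMap.range_eq_map, ← span_range_aO, Submodule.map_span, bocksteinIdeal, Ideal.span,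
    Submodule.map_span, ← Set.range_comp, ← Set.range_comp]
  apply Submodule.span_eq_span
  · rintro _ ⟨j, rfl⟩
    by_cases hj : ∃ r : ℕ, (j : ℤ) + 1 = r * ((p : ℤ) - 1)
    · obtain ⟨r, hr⟩ := hj
      rw [Function.comp_apply, hf j r hr]
      exact Submodule.smul_of_tower_mem _ _ (Submodule.subset_span ⟨r, rfl⟩)
    · rw [Function.comp_apply, hf0 j hj]
      exact zero_mem _
  · rintro _ ⟨r, rfl⟩
    rcases r with _ | r
    · simp [dlMkO_bockstein_zero]
    · have hj : (((r + 1) * (p - 1) - 1 : ℕ) : ℤ) + 1 = (r + 1 : ℕ) * ((p : ℤ) - 1) := by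
        have : 1 ≤ (r + 1) * (p - 1) := Nat.mul_pos r.succ_pos (by omega)
        push_cast [Nat.cast_sub this, Nat.cast_sub (by omega : 1 ≤ p)]
        ring
      have hsign : ((-1 : ZMod p) ^ (r + 1)) • f (aO p ((r + 1) * (p - 1) - 1)) =
          mkNO p (dlMkO p (gen p true (r + 1))) := by
        rw [hf _ _ hj]
        refine (smul_smul (α := NO p) ((-1 : ZMod p) ^ (r + 1)) _ _).trans ?_
        rw [← mul_pow, neg_one_mul, neg_neg, one_pow]
        exact one_smul (ZMod p) _
      rw [Function.comp_apply, mkNOₗ_apply, ← hsign]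
      exact Submodule.smul_of_tower_mem _ _ (Submodule.subset_span ⟨_, rfl⟩)

end DyerLashof

theorem transfer_image_is_span_of_bockstein_monomials
    (p : ℕ) [Fact p.Prime] (hp : Odd p)
    (f : MO p →ₗ[DLO p] NO p)
    (hf : ∀ j r : ℕ, (j : ℤ) + 1 = r * ((p : ℤ) - 1) →
      f (aO p j) = ((-1 : ZMod p) ^ r) • mkNO p (dlMkO p (gen p true r)))
    (hf0 : ∀ j : ℕ, (¬ ∃ r : ℕ, (j : ℤ) + 1 = r * ((p : ℤ) - 1)) → f (aO p j) = 0) :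
    (LinearMap.range f : Set (NO p)) =
      (Submodule.span (ZMod p)
        {x : NO p | ∃ L : List DLGen, AdmissibleO p L ∧ (∃ g ∈ L, g.1 = true) ∧
          0 < excessO p L + bO L ∧
          x = mkNO p (dlMkO p ((L.map fun g => gen p g.1 g.2).prod))} : Set (NO p)) := by
  have hp2 : 2 ≤ p := (Fact.out : p.Prime).two_le
  rw [DyerLashof.range_eq_map_bocksteinIdeal p hp2 f hf hf0]
  exact DyerLashof.coe_map_bocksteinIdeal p hp hp2

end
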